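/- arXiv:2105.12664 — 3 statements merged into one kernel-verified Lean document; each statement's English description precedes it below -/
import Mathlib

section
/- Let A be a 4-by-4 reciprocal matrix. There exist real numbers X₁, X₂, c₁, c₂ such that det(Re(e^{iθ}A) − λI₄) = (λ² − (X₁²cos²θ + c₁²))·(λ² − (X₂²cos²θ + c₂²)) for all θ, λ ∈ ℝ if and only if ξ₂ = φξ₁ − φ⁻¹ξ₃ or ξ₂ = φξ₃ − φ⁻¹ξ₁. (This is the criterion for the Kippenhahn curve of A to consist of two ellipses centered at the origin.) -/
/-!
`Re(e^{iθ} A) - λ` is tridiagonal with diagonal `-λ`, and the product of its two entries in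
position `(j, j+1)`, `(j+1, j)` is `ξ_j + cos²θ`; so its determinant is the quartic
`λ⁴ - (3 cos²θ + ξ₁ + ξ₂ + ξ₃) λ² + (cos²θ + ξ₁)(cos²θ + ξ₃)`. As `cos²θ` takes three distinct
values, this factors as `(λ² - (x₁ cos²θ + y₁))(λ² - (x₂ cos²θ + y₂))` iff `x₁ + x₂ = 3`,
`x₁ x₂ = 1`, `y₁ + y₂ = ξ₁ + ξ₂ + ξ₃`, `y₁ y₂ = ξ₁ ξ₃` and `x₁ y₂ + x₂ y₁ = ξ₁ + ξ₃`.
Then `{x₁, x₂} = {φ², φ⁻²}`, and eliminating `y₁, y₂` leaves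
`ξ₂² - (ξ₁ + ξ₃) ξ₂ - (ξ₁ + ξ₃)² + 5 ξ₁ ξ₃ = 0`, whose roots in `ξ₂` are
`φ ξ₁ - φ⁻¹ ξ₃` and `φ ξ₃ - φ⁻¹ ξ₁`.
-/

open Matrix Polynomial

/-- A tridiagonal complex matrix with zero main diagonal whose symmetric
off-diagonal entries have pairwise products equal to one. -/
def IsReciprocal {n : ℕ} (A : Matrix (Fin n) (Fin n) ℂ) : Prop :=
  (∀ i j : Fin n, ((i : ℤ) - (j : ℤ)) ^ 2 ≠ 1 → A i j = 0) ∧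
  ∀ i j : Fin n, (j : ℕ) = (i : ℕ) + 1 → A i j * A j i = 1

/-- The Hermitian matrix `Re (e^{iθ} A) = (e^{iθ}A + (e^{iθ}A)*)/2`. -/
noncomputable def RePart {n : ℕ} (θ : ℝ) (A : Matrix (Fin n) (Fin n) ℂ) :
    Matrix (Fin n) (Fin n) ℂ :=
  (2 : ℂ)⁻¹ • (Complex.exp (θ * Complex.I) • A + (Complex.exp (θ * Complex.I) • A)ᴴ)

open ComplexConjugate

noncomputable def rePartEntry (θ : ℝ) (a b : ℂ) : ℂ :=
  2⁻¹ * (Complex.exp (θ * Complex.I) * a + star (Complex.exp (θ * Complex.I) * b))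

lemma rePart_apply {n : ℕ} (θ : ℝ) (A : Matrix (Fin n) (Fin n) ℂ) (i j : Fin n) :
    RePart θ A i j = rePartEntry θ (A i j) (A j i) := by
  simp [RePart, rePartEntry, conjTranspose_apply]

lemma rePartEntry_zero (θ : ℝ) : rePartEntry θ 0 0 = 0 := by
  simp [rePartEntry]

lemma rePartEntry_mul_rePartEntry (θ : ℝ) {a b : ℂ} (h : a * b = 1) :
    rePartEntry θ a b * rePartEntry θ b a = (((‖a‖ - ‖b‖) ^ 2 / 4 + Real.cos θ ^ 2 : ℝ) : ℂ) := by
  have hconj : conj a * conj b = 1 := by rw [← map_mul, h, map_one]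
  have hnorm : (‖a‖ : ℂ) * ‖b‖ = 1 := by exact_mod_cast (norm_mul a b).symm.trans (by simp [h])
  have hpyth : (Real.cos θ : ℂ) ^ 2 + (Real.sin θ : ℂ) ^ 2 = 1 := by
    exact_mod_cast Real.cos_sq_add_sin_sq θ
  -- with `E = e^{iθ}`, four times the product is `E² ab + EĒ (|a|² + |b|²) + Ē² āb̄`
  simp only [rePartEntry, Complex.exp_ofReal_mul_I, Complex.star_def, map_mul, map_add,
    Complex.conj_ofReal, Complex.conj_I, Complex.ofReal_add, Complex.ofReal_div,
    Complex.ofReal_pow, Complex.ofReal_sub, Complex.ofReal_ofNat]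
  linear_combination (norm := (ring_nf; simp only [Complex.I_sq]; ring_nf))
    ((Real.cos θ : ℂ) + Real.sin θ * Complex.I) ^ 2 / 4 * h
    + ((Real.cos θ : ℂ) - Real.sin θ * Complex.I) ^ 2 / 4 * hconj
    + ((a * conj a + b * conj b) / 4 - 1 / 2) * hpyth
    + (Complex.mul_conj' a + Complex.mul_conj' b) / 4 + hnorm / 2

lemma det_tridiagonal_four (d m₁ m₂ m₃ n₁ n₂ n₃ : ℂ) :
    !![-d, m₁, 0, 0; n₁, -d, m₂, 0; 0, n₂, -d, m₃; 0, 0, n₃, -d].det =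
      d ^ 4 - (m₁ * n₁ + m₂ * n₂ + m₃ * n₃) * d ^ 2 + (m₁ * n₁) * (m₃ * n₃) := by
  simp [det_succ_row_zero, Fin.sum_univ_succ, Fin.succAbove]
  ring

lemma IsReciprocal.rePart_sub_smul_one {A : Matrix (Fin 4) (Fin 4) ℂ} (hA : IsReciprocal A)
    (θ lam : ℝ) :
    RePart θ A - (lam : ℂ) • 1 =
      !![-(lam : ℂ), rePartEntry θ (A 0 1) (A 1 0), 0, 0;
        rePartEntry θ (A 1 0) (A 0 1), -(lam : ℂ), rePartEntry θ (A 1 2) (A 2 1), 0;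
        0, rePartEntry θ (A 2 1) (A 1 2), -(lam : ℂ), rePartEntry θ (A 2 3) (A 3 2);
        0, 0, rePartEntry θ (A 3 2) (A 2 3), -(lam : ℂ)] := by
  ext i j
  fin_cases i <;> fin_cases j <;>
    simp [rePart_apply, one_apply, rePartEntry_zero, hA.1]

lemma IsReciprocal.det_rePart_sub_smul_one {A : Matrix (Fin 4) (Fin 4) ℂ} (hA : IsReciprocal A)
    (θ lam : ℝ) :
    (RePart θ A - (lam : ℂ) • 1).det =
      ((lam ^ 4 - (3 * Real.cos θ ^ 2 + ((‖A 0 1‖ - ‖A 1 0‖) ^ 2 / 4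
          + (‖A 1 2‖ - ‖A 2 1‖) ^ 2 / 4 + (‖A 2 3‖ - ‖A 3 2‖) ^ 2 / 4)) * lam ^ 2
        + (Real.cos θ ^ 2 + (‖A 0 1‖ - ‖A 1 0‖) ^ 2 / 4)
          * (Real.cos θ ^ 2 + (‖A 2 3‖ - ‖A 3 2‖) ^ 2 / 4) : ℝ) : ℂ) := by
  rw [hA.rePart_sub_smul_one, det_tridiagonal_four,
    rePartEntry_mul_rePartEntry θ (hA.2 0 1 rfl), rePartEntry_mul_rePartEntry θ (hA.2 1 2 rfl),
    rePartEntry_mul_rePartEntry θ (hA.2 2 3 rfl)]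
  push_cast
  ring

open Real

lemma forall_quartic_eq_mul_iff {S ξ₁ ξ₃ X₁ X₂ c₁ c₂ : ℝ} :
    (∀ θ lam : ℝ, lam ^ 4 - (3 * cos θ ^ 2 + S) * lam ^ 2 + (cos θ ^ 2 + ξ₁) * (cos θ ^ 2 + ξ₃) =
        (lam ^ 2 - (X₁ ^ 2 * cos θ ^ 2 + c₁ ^ 2)) * (lam ^ 2 - (X₂ ^ 2 * cos θ ^ 2 + c₂ ^ 2))) ↔
      X₁ ^ 2 + X₂ ^ 2 = 3 ∧ X₁ ^ 2 * X₂ ^ 2 = 1 ∧ c₁ ^ 2 + c₂ ^ 2 = S ∧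
        c₁ ^ 2 * c₂ ^ 2 = ξ₁ * ξ₃ ∧ X₁ ^ 2 * c₂ ^ 2 + X₂ ^ 2 * c₁ ^ 2 = ξ₁ + ξ₃ := by
  constructor
  · intro h
    -- `cos θ ^ 2` takes the values `0`, `1/4`, `1`, enough to separate the coefficients
    have h₀₀ := h (π / 2) 0
    have h₀₁ := h (π / 2) 1
    have h₁₀ := h 0 0
    have h₁₁ := h 0 1
    have h₄₀ := h (π / 3) 0
    rw [cos_pi_div_two] at h₀₀ h₀₁
    rw [cos_zero] at h₁₀ h₁₁
    rw [cos_pi_div_three] at h₄₀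
    have hc : c₁ ^ 2 + c₂ ^ 2 = S := by linear_combination h₀₁ - h₀₀
    have hX : X₁ ^ 2 + X₂ ^ 2 = 3 := by linear_combination h₁₁ - h₁₀ - hc
    refine ⟨hX, ?_, hc, by linear_combination -h₀₀, ?_⟩
    · linear_combination (16 * (h₄₀ - h₀₀) - 4 * (h₁₀ - h₀₀)) / 3
    · linear_combination ((h₁₀ - h₀₀) - 16 * (h₄₀ - h₀₀)) / 3
  · rintro ⟨hX, hXX, hc, hcc, hXc⟩ θ lam
    linear_combination cos θ ^ 2 * lam ^ 2 * hX + lam ^ 2 * hc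
      - cos θ ^ 4 * hXX - hcc - cos θ ^ 2 * hXc

section
open goldenRatio

lemma goldenRatio_factor (ξ₁ ξ₂ ξ₃ : ℝ) :
    (ξ₂ - (φ * ξ₁ - φ⁻¹ * ξ₃)) * (ξ₂ - (φ * ξ₃ - φ⁻¹ * ξ₁)) =
      ξ₂ ^ 2 - (ξ₁ + ξ₃) * ξ₂ - (ξ₁ + ξ₃) ^ 2 + 5 * (ξ₁ * ξ₃) := by
  rw [inv_goldenRatio]
  linear_combination (-(ξ₁ + ξ₃) * ξ₂ + (φ + ψ + 1) * ξ₁ * ξ₃) * goldenRatio_add_goldenConj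
    + (ξ₁ - ξ₃) ^ 2 * goldenRatio_mul_goldenConj

lemma exists_coeffs_iff_golden {ξ₁ ξ₂ ξ₃ : ℝ} (h₁ : 0 ≤ ξ₁) (h₃ : 0 ≤ ξ₃) :
    (∃ X₁ X₂ c₁ c₂ : ℝ, X₁ ^ 2 + X₂ ^ 2 = 3 ∧ X₁ ^ 2 * X₂ ^ 2 = 1 ∧
        c₁ ^ 2 + c₂ ^ 2 = ξ₁ + ξ₂ + ξ₃ ∧ c₁ ^ 2 * c₂ ^ 2 = ξ₁ * ξ₃ ∧
        X₁ ^ 2 * c₂ ^ 2 + X₂ ^ 2 * c₁ ^ 2 = ξ₁ + ξ₃) ↔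
      ξ₂ = φ * ξ₁ - φ⁻¹ * ξ₃ ∨ ξ₂ = φ * ξ₃ - φ⁻¹ * ξ₁ := by
  constructor
  · rintro ⟨X₁, X₂, c₁, c₂, hX, hXX, hc, hcc, hXc⟩
    have hXc' : X₁ ^ 2 * c₁ ^ 2 + X₂ ^ 2 * c₂ ^ 2 = 3 * (ξ₁ + ξ₂ + ξ₃) - (ξ₁ + ξ₃) := by
      linear_combination (c₁ ^ 2 + c₂ ^ 2) * hX + 3 * hc - hXc
    have hvieta : (X₁ ^ 2 * c₂ ^ 2 + X₂ ^ 2 * c₁ ^ 2) * (X₁ ^ 2 * c₁ ^ 2 + X₂ ^ 2 * c₂ ^ 2) =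
        X₁ ^ 2 * X₂ ^ 2 * ((c₁ ^ 2 + c₂ ^ 2) ^ 2 - 2 * (c₁ ^ 2 * c₂ ^ 2)) +
          c₁ ^ 2 * c₂ ^ 2 * ((X₁ ^ 2 + X₂ ^ 2) ^ 2 - 2 * (X₁ ^ 2 * X₂ ^ 2)) := by
      ring
    rw [hXc, hXc', hX, hXX, hc, hcc] at hvieta
    have hprod := goldenRatio_factor ξ₁ ξ₂ ξ₃
    rw [show ξ₂ ^ 2 - (ξ₁ + ξ₃) * ξ₂ - (ξ₁ + ξ₃) ^ 2 + 5 * (ξ₁ * ξ₃) = 0 by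
      linear_combination -hvieta] at hprod
    rcases mul_eq_zero.1 hprod with h | h
    · exact Or.inl (sub_eq_zero.1 h)
    · exact Or.inr (sub_eq_zero.1 h)
  · have hφ : φ * φ⁻¹ = 1 := mul_inv_cancel₀ goldenRatio_ne_zero
    have hφ' : φ - φ⁻¹ = 1 := by rw [inv_goldenRatio, sub_neg_eq_add, goldenRatio_add_goldenConj]
    -- `φ²` and `φ⁻²` are the roots of `x² - 3x + 1`
    rintro (h | h)
    · refine ⟨φ, φ⁻¹, φ * √ξ₁, φ⁻¹ * √ξ₃, ?_⟩
      simp only [mul_pow, sq_sqrt h₁, sq_sqrt h₃]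
      refine ⟨?_, ?_, ?_, ?_, ?_⟩ <;> grind
    · refine ⟨φ, φ⁻¹, φ * √ξ₃, φ⁻¹ * √ξ₁, ?_⟩
      simp only [mul_pow, sq_sqrt h₁, sq_sqrt h₃]
      refine ⟨?_, ?_, ?_, ?_, ?_⟩ <;> grind

end

/-- Criterion for the Kippenhahn curve of a 4-by-4 reciprocal matrix to consist of
two ellipses centered at the origin. -/
theorem two_concentric_ellipses_four (A : Matrix (Fin 4) (Fin 4) ℂ) (hA : IsReciprocal A)
    (ξ₁ ξ₂ ξ₃ : ℝ)
    (h1 : ξ₁ = (‖A 0 1‖ - ‖A 1 0‖) ^ 2 / 4)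
    (h2 : ξ₂ = (‖A 1 2‖ - ‖A 2 1‖) ^ 2 / 4)
    (h3 : ξ₃ = (‖A 2 3‖ - ‖A 3 2‖) ^ 2 / 4)
    (φ : ℝ) (hφ : φ = (1 + Real.sqrt 5) / 2) :
    (∃ X₁ X₂ c₁ c₂ : ℝ, ∀ θ lam : ℝ,
      (RePart θ A - (lam : ℂ) • 1).det =
        (((lam ^ 2 - (X₁ ^ 2 * Real.cos θ ^ 2 + c₁ ^ 2)) *
          (lam ^ 2 - (X₂ ^ 2 * Real.cos θ ^ 2 + c₂ ^ 2)) : ℝ) : ℂ)) ↔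
      (ξ₂ = φ * ξ₁ - φ⁻¹ * ξ₃ ∨ ξ₂ = φ * ξ₃ - φ⁻¹ * ξ₁) := by
  have hdet (θ lam : ℝ) : (RePart θ A - (lam : ℂ) • 1).det =
      ((lam ^ 4 - (3 * cos θ ^ 2 + (ξ₁ + ξ₂ + ξ₃)) * lam ^ 2
        + (cos θ ^ 2 + ξ₁) * (cos θ ^ 2 + ξ₃) : ℝ) : ℂ) := by
    subst h1 h2 h3
    exact hA.det_rePart_sub_smul_one θ lam
  have hξ₁ : 0 ≤ ξ₁ := h1 ▸ by positivity
  have hξ₃ : 0 ≤ ξ₃ := h3 ▸ by positivity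
  simp only [hdet, Complex.ofReal_inj, forall_quartic_eq_mul_iff]
  exact hφ ▸ exists_coeffs_iff_golden hξ₁ hξ₃
end

section
/- Let A be a 5-by-5 reciprocal matrix such that ξ₁ = ξ₄ or ξ₁ − ξ₄ = 2(ξ₃ − ξ₂). Then for all θ, λ ∈ ℝ, writing ρ = cos²θ: det(Re(e^{iθ}A) − λI₅) = −λ·(λ² − (3ρ + c₁²))·(λ² − (ρ + c₂²)), where c₁² = ξ₂ + ξ₃ + (ξ₁ + ξ₄)/2 and c₂² = (ξ₁ + ξ₄)/2. (Thus the Kippenhahn curve of A consists of the origin and two concentric ellipses with foci ±√3 and ±1 and minor half-axes c₁ and c₂ respectively.) -/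
/-!
`Re (e^{iθ} A)` is a Hermitian tridiagonal matrix with zero diagonal, so its characteristic
polynomial depends only on the products `|b_j|²` of its symmetric off-diagonal entries:
for `n = 5` it is `-λ⁵ + λ³ (p₁ + p₂ + p₃ + p₄) - λ (p₁p₃ + p₁p₄ + p₂p₄)` with `p_j = |b_j|²`.
Because `a_{j,j+1} a_{j+1,j} = 1`, the cross term in `|b_j|²` is `Re e^{2iθ}/2`, which gives
`p_j = cos² θ + ξ_j`. The quintic then differs from the claimed product by
`λ (ξ₁ - ξ₄) (ξ₁ - ξ₄ - 2 (ξ₃ - ξ₂)) / 4`, which the hypothesis on the `ξ_j` makes vanish.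
-/

open Matrix Polynomial

theorem Matrix.det_sub_smul_one_fin_five {R : Type*} [CommRing R] (M : Matrix (Fin 5) (Fin 5) R)
    (hM : ∀ i j : Fin 5, ((i : ℤ) - (j : ℤ)) ^ 2 ≠ 1 → M i j = 0) (l : R) :
    (M - l • 1).det =
      -l ^ 5 + l ^ 3 * (M 0 1 * M 1 0 + M 1 2 * M 2 1 + M 2 3 * M 3 2 + M 3 4 * M 4 3)
        - l * (M 0 1 * M 1 0 * (M 2 3 * M 3 2) + M 0 1 * M 1 0 * (M 3 4 * M 4 3)
          + M 1 2 * M 2 1 * (M 3 4 * M 4 3)) := by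
  have htri : M - l • 1 = !![-l, M 0 1, 0, 0, 0; M 1 0, -l, M 1 2, 0, 0; 0, M 2 1, -l, M 2 3, 0;
      0, 0, M 3 2, -l, M 3 4; 0, 0, 0, M 4 3, -l] := by
    ext i j
    fin_cases i <;> fin_cases j <;> simp [hM]
  rw [htri]
  simp [det_succ_row_zero, Fin.sum_univ_succ, Fin.succAbove]
  ring

theorem Complex.normSq_exp_mul_add_conj_exp_mul_of_mul_eq_one (θ : ℝ) {a c : ℂ}
    (h : a * c = 1) :
    normSq (exp (θ * I) * a + starRingEnd ℂ (exp (θ * I) * c))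
      = (‖a‖ - ‖c‖) ^ 2 + 4 * Real.cos θ ^ 2 := by
  have hnorm : ‖a‖ * ‖c‖ = 1 := by rw [← norm_mul, h, norm_one]
  have hcross : exp (θ * I) * a * (exp (θ * I) * c) = exp (↑(2 * θ) * I) := by
    rw [show (↑(2 * θ) * I : ℂ) = θ * I + θ * I by push_cast; ring, exp_add]
    linear_combination exp (θ * I) ^ 2 * h
  rw [normSq_add, conj_conj, normSq_conj, normSq_mul, normSq_mul, hcross, exp_ofReal_mul_I_re,
    Real.cos_two_mul]
  simp only [normSq_eq_norm_sq, norm_exp_ofReal_mul_I]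
  linear_combination 2 * hnorm

section RePart

variable {n : ℕ} (θ : ℝ) {A : Matrix (Fin n) (Fin n) ℂ}

theorem rePart_apply_s10 (i j : Fin n) :
    RePart θ A i j
      = (2 : ℂ)⁻¹ * (Complex.exp (θ * Complex.I) * A i j
          + starRingEnd ℂ (Complex.exp (θ * Complex.I) * A j i)) := by
  simp only [RePart, Matrix.smul_apply, Matrix.add_apply, conjTranspose_apply, smul_eq_mul,
    Complex.star_def]

theorem isHermitian_rePart (A : Matrix (Fin n) (Fin n) ℂ) : (RePart θ A).IsHermitian := by
  simp [IsHermitian, RePart, conjTranspose_smul, conjTranspose_add, add_comm]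

theorem IsReciprocal.rePart_apply_eq_zero (hA : IsReciprocal A) (i j : Fin n)
    (hij : ((i : ℤ) - (j : ℤ)) ^ 2 ≠ 1) : RePart θ A i j = 0 := by
  have hji : ((j : ℤ) - (i : ℤ)) ^ 2 ≠ 1 := by rwa [← neg_sub, neg_sq]
  simp [rePart_apply_s10, hA.1 i j hij, hA.1 j i hji]

theorem IsReciprocal.rePart_mul_rePart_swap (hA : IsReciprocal A) {i j : Fin n}
    (hij : (j : ℕ) = (i : ℕ) + 1) :
    RePart θ A i j * RePart θ A j i
      = ((Real.cos θ ^ 2 + (‖A i j‖ - ‖A j i‖) ^ 2 / 4 : ℝ) : ℂ) := by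
  rw [← (isHermitian_rePart θ A).apply j i, Complex.star_def, Complex.mul_conj, rePart_apply_s10,
    Complex.normSq_mul, Complex.normSq_exp_mul_add_conj_exp_mul_of_mul_eq_one θ (hA.2 i j hij),
    map_inv₀, Complex.normSq_ofNat]
  congr 1
  ring

end RePart

theorem quintic_factorization_of_concentric (ρ ξ₁ ξ₂ ξ₃ ξ₄ l : ℝ)
    (hcon : ξ₁ = ξ₄ ∨ ξ₁ - ξ₄ = 2 * (ξ₃ - ξ₂)) :
    -l ^ 5 + l ^ 3 * ((ρ + ξ₁) + (ρ + ξ₂) + (ρ + ξ₃) + (ρ + ξ₄))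
        - l * ((ρ + ξ₁) * (ρ + ξ₃) + (ρ + ξ₁) * (ρ + ξ₄) + (ρ + ξ₂) * (ρ + ξ₄))
      = -l * ((l ^ 2 - (3 * ρ + (ξ₂ + ξ₃ + (ξ₁ + ξ₄) / 2))) * (l ^ 2 - (ρ + (ξ₁ + ξ₄) / 2))) := by
  rcases hcon with hc | hc
  · linear_combination (-l * ((ξ₃ - ξ₂) / 2 - (ξ₁ - ξ₄) / 4)) * hc
  · linear_combination (l * (ξ₁ - ξ₄) / 4) * hc

/-- Under condition (5), the Kippenhahn polynomial of a 5-by-5 reciprocal matrix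
factors, so that its Kippenhahn curve consists of the origin and two concentric
ellipses. -/
theorem concentric_factorization_five (A : Matrix (Fin 5) (Fin 5) ℂ) (hA : IsReciprocal A)
    (ξ₁ ξ₂ ξ₃ ξ₄ : ℝ)
    (h1 : ξ₁ = (‖A 0 1‖ - ‖A 1 0‖) ^ 2 / 4)
    (h2 : ξ₂ = (‖A 1 2‖ - ‖A 2 1‖) ^ 2 / 4)
    (h3 : ξ₃ = (‖A 2 3‖ - ‖A 3 2‖) ^ 2 / 4)
    (h4 : ξ₄ = (‖A 3 4‖ - ‖A 4 3‖) ^ 2 / 4)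
    (hcon : ξ₁ = ξ₄ ∨ ξ₁ - ξ₄ = 2 * (ξ₃ - ξ₂)) :
    ∀ θ lam : ℝ,
      (RePart θ A - (lam : ℂ) • 1).det =
        ((-lam * ((lam ^ 2 - (3 * Real.cos θ ^ 2 + (ξ₂ + ξ₃ + (ξ₁ + ξ₄) / 2))) *
            (lam ^ 2 - (Real.cos θ ^ 2 + (ξ₁ + ξ₄) / 2))) : ℝ) : ℂ) := by
  intro θ lam
  rw [det_sub_smul_one_fin_five _ (hA.rePart_apply_eq_zero θ),
    hA.rePart_mul_rePart_swap θ (i := 0) (j := 1) rfl,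
    hA.rePart_mul_rePart_swap θ (i := 1) (j := 2) rfl,
    hA.rePart_mul_rePart_swap θ (i := 2) (j := 3) rfl,
    hA.rePart_mul_rePart_swap θ (i := 3) (j := 4) rfl, ← h1, ← h2, ← h3, ← h4,
    ← quintic_factorization_of_concentric _ _ _ _ _ _ hcon]
  push_cast
  ring
end

section
/- Let A be a 5-by-5 reciprocal matrix with (ξ₁, ξ₂, ξ₃, ξ₄) ≠ (0, 0, 0, 0). There exist real numbers X, c and p ≠ 0 such that det(Re(e^{iθ}A) − λI₅) = −λ·(λ⁴ − 2λ²((X² + p²)cos²θ + c²) + ((X² − p²)cos²θ + c²)²) for all θ, λ ∈ ℝ if and only if ξ₂ξ₃ = 0, ξ₂ + ξ₃ ≠ 0, ξ₁ = (√3/2)(ξ₂ + ξ₃) + ξ₃ and ξ₄ = (√3/2)(ξ₂ + ξ₃) + ξ₂. Moreover, in that case the identity holds with p = (√3 − 1)/2, X = (√3 + 1)/2 and c = (1 + √3)√(ξ₂ + ξ₃)/2. (This is the criterion for the Kippenhahn curve of A to consist of the origin and two non-concentric ellipses, with foci √3, −1 and −√3, 1 respectively and minor half-axis c.) -/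
/-!
For a reciprocal `A`, the determinant of the tridiagonal matrix `Re (e^{iθ} A) - λ I` only sees
the products of symmetric off-diagonal entries, and these equal `ξⱼ + cos² θ`. Hence it is
`-λ (λ⁴ - (Σ ξⱼ + 4t) λ² + Q(t))` with `t = cos² θ` and `Q` quadratic in `t`. Matching this with
the two-ellipse form at `t = 0, 1/2, 1` forces `Σ ξⱼ = 2c²`, `Q(0) = c⁴`, `(X² - p²)² = 3` and
`2ξ₁ + ξ₂ + ξ₃ + 2ξ₄ = 2(X² - p²)c²`. Since `ξⱼ ≥ 0`, not all zero, `X² - p² = √3`; then the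
last equation gives `ξ₁ + ξ₄ = (√3 + 1)(ξ₂ + ξ₃)`, after which `Q(0) = (Σ ξⱼ)² / 4` reads
`(ξ₁ - √3/2 (ξ₂ + ξ₃) - ξ₃)² + ξ₂ ξ₃ = 0`.
-/

open Matrix Polynomial

open Complex ComplexConjugate in
lemma RePart_apply {n : ℕ} (θ : ℝ) (A : Matrix (Fin n) (Fin n) ℂ) (i j : Fin n) :
    RePart θ A i j = 2⁻¹ * (exp (θ * I) * A i j + conj (exp (θ * I) * A j i)) := by
  simp [RePart]

open Complex ComplexConjugate in
lemma RePart_apply_mul_RePart_apply {n : ℕ} (θ : ℝ) (A : Matrix (Fin n) (Fin n) ℂ) {i j : Fin n}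
    (h : A i j * A j i = 1) :
    RePart θ A i j * RePart θ A j i =
      (((‖A i j‖ - ‖A j i‖) ^ 2 / 4 + Real.cos θ ^ 2 : ℝ) : ℂ) := by
  rw [RePart_apply, RePart_apply, map_mul, map_mul]
  set a := A i j
  set b := A j i
  set e := exp (θ * I)
  have hce : conj e = exp (-θ * I) := by rw [← exp_conj]; simp
  have he : e * conj e = 1 := by rw [hce, ← exp_add]; simp
  have hsum : e + conj e = 2 * cos θ := by rw [hce, two_cos]
  have hconj : conj a * conj b = 1 := by rw [← map_mul, h, map_one]
  have hnorm : (‖a‖ : ℂ) * ‖b‖ = 1 := by norm_cast; rw [← norm_mul, h, norm_one]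
  push_cast
  -- `(e a + ē b̄)(e b + ē ā) = e² + ē² + ‖a‖² + ‖b‖²` and `e² + ē² = (e + ē)² - 2 = 4 cos² θ - 2`
  linear_combination (e ^ 2 / 4) * h + (conj e ^ 2 / 4) * hconj + (e * conj e / 4) * mul_conj' a
    + (e * conj e / 4) * mul_conj' b + (((‖a‖ : ℂ) ^ 2 + (‖b‖ : ℂ) ^ 2) / 4 - 1 / 2) * he
    + ((e + conj e + 2 * cos θ) / 4) * hsum + (1 / 2 : ℂ) * hnorm

lemma IsReciprocal.RePart_apply_eq_zero {n : ℕ} {A : Matrix (Fin n) (Fin n) ℂ}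
    (hA : IsReciprocal A) (θ : ℝ) {i j : Fin n} (hij : ((i : ℤ) - (j : ℤ)) ^ 2 ≠ 1) :
    RePart θ A i j = 0 := by
  have hji : ((j : ℤ) - (i : ℤ)) ^ 2 ≠ 1 := by rwa [← neg_sub, neg_sq]
  rw [RePart_apply, hA.1 i j hij, hA.1 j i hji]
  simp

lemma det_fin_five_tridiagonal {R : Type*} [CommRing R] (d a₁ a₂ a₃ a₄ b₁ b₂ b₃ b₄ : R) :
    det !![d, a₁, 0, 0, 0; b₁, d, a₂, 0, 0; 0, b₂, d, a₃, 0; 0, 0, b₃, d, a₄; 0, 0, 0, b₄, d]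
    = d ^ 5 - d ^ 3 * (a₁ * b₁ + a₂ * b₂ + a₃ * b₃ + a₄ * b₄)
      + d * (a₁ * b₁ * (a₃ * b₃) + a₁ * b₁ * (a₄ * b₄) + a₂ * b₂ * (a₄ * b₄)) := by
  simp [det_succ_row_zero, Fin.sum_univ_succ, Fin.succAbove]
  ring

lemma IsReciprocal.RePart_sub_smul_one_eq {A : Matrix (Fin 5) (Fin 5) ℂ} (hA : IsReciprocal A)
    (θ lam : ℝ) :
    RePart θ A - (lam : ℂ) • 1 =
      !![-(lam : ℂ), RePart θ A 0 1, 0, 0, 0;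
        RePart θ A 1 0, -(lam : ℂ), RePart θ A 1 2, 0, 0;
        0, RePart θ A 2 1, -(lam : ℂ), RePart θ A 2 3, 0;
        0, 0, RePart θ A 3 2, -(lam : ℂ), RePart θ A 3 4;
        0, 0, 0, RePart θ A 4 3, -(lam : ℂ)] := by
  ext i j
  fin_cases i <;> fin_cases j <;> simp [one_apply] <;> exact hA.RePart_apply_eq_zero θ (by decide)

/-- `t` stands for `cos² θ`, and `ξⱼ + t` for the product of the `j`-th pair of symmetric
off-diagonal entries of `Re (e^{iθ} A)`. -/
def kippenhahnPoly5 (ξ₁ ξ₂ ξ₃ ξ₄ t lam : ℝ) : ℝ :=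
  -lam * (lam ^ 4 - lam ^ 2 * (ξ₁ + ξ₂ + ξ₃ + ξ₄ + 4 * t)
    + ((ξ₁ + t) * (ξ₃ + t) + (ξ₁ + t) * (ξ₄ + t) + (ξ₂ + t) * (ξ₄ + t)))

def twoEllipsesPoly (X c p t lam : ℝ) : ℝ :=
  -lam * (lam ^ 4 - 2 * lam ^ 2 * ((X ^ 2 + p ^ 2) * t + c ^ 2) + ((X ^ 2 - p ^ 2) * t + c ^ 2) ^ 2)

lemma IsReciprocal.det_RePart_sub_smul_one {A : Matrix (Fin 5) (Fin 5) ℂ} (hA : IsReciprocal A)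
    {ξ₁ ξ₂ ξ₃ ξ₄ : ℝ}
    (h1 : ξ₁ = (‖A 0 1‖ - ‖A 1 0‖) ^ 2 / 4) (h2 : ξ₂ = (‖A 1 2‖ - ‖A 2 1‖) ^ 2 / 4)
    (h3 : ξ₃ = (‖A 2 3‖ - ‖A 3 2‖) ^ 2 / 4) (h4 : ξ₄ = (‖A 3 4‖ - ‖A 4 3‖) ^ 2 / 4)
    (θ lam : ℝ) :
    (RePart θ A - (lam : ℂ) • 1).det = kippenhahnPoly5 ξ₁ ξ₂ ξ₃ ξ₄ (Real.cos θ ^ 2) lam := by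
  rw [hA.RePart_sub_smul_one_eq, det_fin_five_tridiagonal,
    RePart_apply_mul_RePart_apply θ A (hA.2 0 1 rfl),
    RePart_apply_mul_RePart_apply θ A (hA.2 1 2 rfl),
    RePart_apply_mul_RePart_apply θ A (hA.2 2 3 rfl),
    RePart_apply_mul_RePart_apply θ A (hA.2 3 4 rfl),
    ← h1, ← h2, ← h3, ← h4, kippenhahnPoly5]
  push_cast
  ring

lemma coeffs_eq_of_kippenhahnPoly5_eq {ξ₁ ξ₂ ξ₃ ξ₄ X c p t : ℝ}
    (h : ∀ lam, kippenhahnPoly5 ξ₁ ξ₂ ξ₃ ξ₄ t lam = twoEllipsesPoly X c p t lam) :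
    ξ₁ + ξ₂ + ξ₃ + ξ₄ + 4 * t = 2 * ((X ^ 2 + p ^ 2) * t + c ^ 2) ∧
      (ξ₁ + t) * (ξ₃ + t) + (ξ₁ + t) * (ξ₄ + t) + (ξ₂ + t) * (ξ₄ + t)
        = ((X ^ 2 - p ^ 2) * t + c ^ 2) ^ 2 := by
  have h₁ := h 1
  have h₂ := h 2
  simp only [kippenhahnPoly5, twoEllipsesPoly] at h₁ h₂
  constructor
  · linear_combination (-1 / 3 : ℝ) * h₁ + (1 / 6 : ℝ) * h₂
  · linear_combination (-4 / 3 : ℝ) * h₁ + (1 / 6 : ℝ) * h₂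

lemma coeffs_eq_of_forall_kippenhahnPoly5_eq {ξ₁ ξ₂ ξ₃ ξ₄ X c p : ℝ}
    (h : ∀ θ lam, kippenhahnPoly5 ξ₁ ξ₂ ξ₃ ξ₄ (Real.cos θ ^ 2) lam
      = twoEllipsesPoly X c p (Real.cos θ ^ 2) lam) :
    ξ₁ + ξ₂ + ξ₃ + ξ₄ = 2 * c ^ 2 ∧ ξ₁ * ξ₃ + ξ₁ * ξ₄ + ξ₂ * ξ₄ = c ^ 4 ∧
      (X ^ 2 - p ^ 2) ^ 2 = 3 ∧ 2 * ξ₁ + ξ₂ + ξ₃ + 2 * ξ₄ = 2 * (X ^ 2 - p ^ 2) * c ^ 2 := by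
  have hcos : Real.cos (Real.pi / 4) ^ 2 = 1 / 2 := by
    rw [Real.cos_pi_div_four, div_pow, Real.sq_sqrt] <;> norm_num
  obtain ⟨hσ, hQ₀⟩ := coeffs_eq_of_kippenhahnPoly5_eq (h (Real.pi / 2))
  obtain ⟨-, hQ_half⟩ := coeffs_eq_of_kippenhahnPoly5_eq (h (Real.pi / 4))
  obtain ⟨-, hQ₁⟩ := coeffs_eq_of_kippenhahnPoly5_eq (h 0)
  rw [Real.cos_pi_div_two] at hσ hQ₀
  rw [hcos] at hQ_half
  rw [Real.cos_zero] at hQ₁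
  refine ⟨by linear_combination hσ, by linear_combination hQ₀, ?_, ?_⟩
  · linear_combination 4 * hQ_half - 2 * hQ₁ - 2 * hQ₀
  · linear_combination 4 * hQ_half - hQ₁ - 3 * hQ₀

lemma kippenhahnPoly5_eq_twoEllipsesPoly {ξ₁ ξ₂ ξ₃ ξ₄ : ℝ} (hs : 0 ≤ ξ₂ + ξ₃) (h₂₃ : ξ₂ * ξ₃ = 0)
    (h₁ : ξ₁ = √3 / 2 * (ξ₂ + ξ₃) + ξ₃) (h₄ : ξ₄ = √3 / 2 * (ξ₂ + ξ₃) + ξ₂) (t lam : ℝ) :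
    kippenhahnPoly5 ξ₁ ξ₂ ξ₃ ξ₄ t lam =
      twoEllipsesPoly ((√3 + 1) / 2) ((1 + √3) * √(ξ₂ + ξ₃) / 2) ((√3 - 1) / 2) t lam := by
  have hr : √3 ^ 2 = 3 := Real.sq_sqrt (by norm_num)
  have hsum : ((√3 + 1) / 2) ^ 2 + ((√3 - 1) / 2) ^ 2 = 2 := by linear_combination hr / 2
  have hdiff : ((√3 + 1) / 2) ^ 2 - ((√3 - 1) / 2) ^ 2 = √3 := by ring
  have hc : ((1 + √3) * √(ξ₂ + ξ₃) / 2) ^ 2 = (2 + √3) / 2 * (ξ₂ + ξ₃) := by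
    linear_combination (1 + √3) ^ 2 / 4 * Real.sq_sqrt hs + (ξ₂ + ξ₃) / 4 * hr
  rw [twoEllipsesPoly, hsum, hdiff, hc, kippenhahnPoly5, h₁, h₄]
  linear_combination lam * (t ^ 2 + (ξ₂ + ξ₃) * t) * hr + lam * h₂₃

lemma xi_eq_of_weighted_sum_eq_sqrt_three {ξ₁ ξ₂ ξ₃ ξ₄ : ℝ} (h₂ : 0 ≤ ξ₂) (h₃ : 0 ≤ ξ₃)
    (hnz : ¬ (ξ₁ = 0 ∧ ξ₂ = 0 ∧ ξ₃ = 0 ∧ ξ₄ = 0))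
    (hL : 2 * ξ₁ + ξ₂ + ξ₃ + 2 * ξ₄ = √3 * (ξ₁ + ξ₂ + ξ₃ + ξ₄))
    (hQ : ξ₁ * ξ₃ + ξ₁ * ξ₄ + ξ₂ * ξ₄ = (ξ₁ + ξ₂ + ξ₃ + ξ₄) ^ 2 / 4) :
    ξ₂ * ξ₃ = 0 ∧ ξ₂ + ξ₃ ≠ 0 ∧
      ξ₁ = √3 / 2 * (ξ₂ + ξ₃) + ξ₃ ∧ ξ₄ = √3 / 2 * (ξ₂ + ξ₃) + ξ₂ := by
  have hr : √3 ^ 2 = 3 := Real.sq_sqrt (by norm_num)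
  have h₄ : ξ₄ = (√3 + 1) * (ξ₂ + ξ₃) - ξ₁ := by
    linear_combination (2 + √3) * hL + (ξ₁ + ξ₂ + ξ₃ + ξ₄) * hr
  subst h₄
  have hsq : (ξ₁ - √3 / 2 * (ξ₂ + ξ₃) - ξ₃) ^ 2 + ξ₂ * ξ₃ = 0 := by linear_combination -hQ
  have h₂₃ : ξ₂ * ξ₃ = 0 := by
    nlinarith [sq_nonneg (ξ₁ - √3 / 2 * (ξ₂ + ξ₃) - ξ₃), mul_nonneg h₂ h₃]
  have h₁ : ξ₁ = √3 / 2 * (ξ₂ + ξ₃) + ξ₃ := by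
    have : ξ₁ - √3 / 2 * (ξ₂ + ξ₃) - ξ₃ = 0 := (pow_eq_zero_iff two_ne_zero).mp (by linarith)
    linarith
  refine ⟨h₂₃, fun hs => hnz ?_, h₁, by linear_combination -h₁⟩
  have : ξ₂ = 0 := by linarith
  have : ξ₃ = 0 := by linarith
  subst_vars
  norm_num

lemma xi_eq_of_coeffs {ξ₁ ξ₂ ξ₃ ξ₄ D c : ℝ} (h₁ : 0 ≤ ξ₁) (h₂ : 0 ≤ ξ₂) (h₃ : 0 ≤ ξ₃) (h₄ : 0 ≤ ξ₄)
    (hnz : ¬ (ξ₁ = 0 ∧ ξ₂ = 0 ∧ ξ₃ = 0 ∧ ξ₄ = 0))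
    (hσ : ξ₁ + ξ₂ + ξ₃ + ξ₄ = 2 * c ^ 2) (hQ : ξ₁ * ξ₃ + ξ₁ * ξ₄ + ξ₂ * ξ₄ = c ^ 4)
    (hD : D ^ 2 = 3) (hL : 2 * ξ₁ + ξ₂ + ξ₃ + 2 * ξ₄ = 2 * D * c ^ 2) :
    ξ₂ * ξ₃ = 0 ∧ ξ₂ + ξ₃ ≠ 0 ∧
      ξ₁ = √3 / 2 * (ξ₂ + ξ₃) + ξ₃ ∧ ξ₄ = √3 / 2 * (ξ₂ + ξ₃) + ξ₂ := by
  rw [← Real.sq_sqrt (show (0 : ℝ) ≤ 3 by norm_num), sq_eq_sq_iff_eq_or_eq_neg] at hD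
  obtain rfl | rfl := hD
  · exact xi_eq_of_weighted_sum_eq_sqrt_three h₂ h₃ hnz (by linear_combination hL - √3 * hσ)
      (by linear_combination hQ - (ξ₁ + ξ₂ + ξ₃ + ξ₄ + 2 * c ^ 2) / 4 * hσ)
  · have : 0 ≤ √3 * c ^ 2 := by positivity
    exact absurd ⟨by linarith, by linarith, by linarith, by linarith⟩ hnz

/-- Criterion for the Kippenhahn curve of a 5-by-5 reciprocal matrix to consist of
the origin and two non-concentric ellipses. -/
theorem two_noncentral_ellipses_five (A : Matrix (Fin 5) (Fin 5) ℂ) (hA : IsReciprocal A)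
    (ξ₁ ξ₂ ξ₃ ξ₄ : ℝ)
    (h1 : ξ₁ = (‖A 0 1‖ - ‖A 1 0‖) ^ 2 / 4)
    (h2 : ξ₂ = (‖A 1 2‖ - ‖A 2 1‖) ^ 2 / 4)
    (h3 : ξ₃ = (‖A 2 3‖ - ‖A 3 2‖) ^ 2 / 4)
    (h4 : ξ₄ = (‖A 3 4‖ - ‖A 4 3‖) ^ 2 / 4)
    (hnz : ¬ (ξ₁ = 0 ∧ ξ₂ = 0 ∧ ξ₃ = 0 ∧ ξ₄ = 0)) :
    ((∃ X c p : ℝ, p ≠ 0 ∧ ∀ θ lam : ℝ,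
      (RePart θ A - (lam : ℂ) • 1).det =
        ((-lam * (lam ^ 4 - 2 * lam ^ 2 * ((X ^ 2 + p ^ 2) * Real.cos θ ^ 2 + c ^ 2)
            + ((X ^ 2 - p ^ 2) * Real.cos θ ^ 2 + c ^ 2) ^ 2) : ℝ) : ℂ)) ↔
      (ξ₂ * ξ₃ = 0 ∧ ξ₂ + ξ₃ ≠ 0 ∧
        ξ₁ = Real.sqrt 3 / 2 * (ξ₂ + ξ₃) + ξ₃ ∧
        ξ₄ = Real.sqrt 3 / 2 * (ξ₂ + ξ₃) + ξ₂)) ∧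
    ((ξ₂ * ξ₃ = 0 ∧ ξ₂ + ξ₃ ≠ 0 ∧
        ξ₁ = Real.sqrt 3 / 2 * (ξ₂ + ξ₃) + ξ₃ ∧
        ξ₄ = Real.sqrt 3 / 2 * (ξ₂ + ξ₃) + ξ₂) →
      ∀ θ lam : ℝ,
        (RePart θ A - (lam : ℂ) • 1).det =
          ((-lam * (lam ^ 4
              - 2 * lam ^ 2 * ((((Real.sqrt 3 + 1) / 2) ^ 2 + ((Real.sqrt 3 - 1) / 2) ^ 2) *
                  Real.cos θ ^ 2 + ((1 + Real.sqrt 3) * Real.sqrt (ξ₂ + ξ₃) / 2) ^ 2)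
              + ((((Real.sqrt 3 + 1) / 2) ^ 2 - ((Real.sqrt 3 - 1) / 2) ^ 2) *
                  Real.cos θ ^ 2 +
                  ((1 + Real.sqrt 3) * Real.sqrt (ξ₂ + ξ₃) / 2) ^ 2) ^ 2) : ℝ) : ℂ)) := by
  have hdet := hA.det_RePart_sub_smul_one h1 h2 h3 h4
  have hback : ξ₂ * ξ₃ = 0 ∧ ξ₂ + ξ₃ ≠ 0 ∧ ξ₁ = √3 / 2 * (ξ₂ + ξ₃) + ξ₃ ∧
      ξ₄ = √3 / 2 * (ξ₂ + ξ₃) + ξ₂ → ∀ θ lam : ℝ, (RePart θ A - (lam : ℂ) • 1).det =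
        twoEllipsesPoly ((√3 + 1) / 2) ((1 + √3) * √(ξ₂ + ξ₃) / 2) ((√3 - 1) / 2)
          (Real.cos θ ^ 2) lam := by
    rintro ⟨h₂₃, -, e₁, e₄⟩ θ lam
    rw [hdet, kippenhahnPoly5_eq_twoEllipsesPoly (by rw [h2, h3]; positivity) h₂₃ e₁ e₄]
  refine ⟨⟨fun ⟨X, c, p, _, h⟩ => ?_, fun hc => ⟨_, _, _, ?_, hback hc⟩⟩, hback⟩
  · obtain ⟨hσ, hQ, hD, hL⟩ := coeffs_eq_of_forall_kippenhahnPoly5_eq fun θ lam =>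
      Complex.ofReal_injective ((hdet θ lam).symm.trans (h θ lam))
    exact xi_eq_of_coeffs (by rw [h1]; positivity) (by rw [h2]; positivity)
      (by rw [h3]; positivity) (by rw [h4]; positivity) hnz hσ hQ hD hL
  · have : (1 : ℝ) < √3 := by norm_num [Real.lt_sqrt]
    linarith
end
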